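/- arXiv:1104.1158 — 5 statements merged into one kernel-verified Lean document; each statement's English description precedes it below -/
import Mathlib

section
/- Let H := L²(V, ℂ) where the real symplectic vector space (V, ω) is endowed with the counting measure, and define for each φ ∈ V the operator w(φ) on H by (w(φ)F)(ψ) := e^{iω(φ,ψ)/2} F(φ+ψ). Then each w(φ) is a well-defined bounded (indeed unitary) operator on H and the map w satisfies the Weyl relations w(0) = 1, w(-φ) = w(φ)*, and w(φ+ψ) = e^{iω(φ,ψ)/2} w(φ) w(ψ). -/
/-!
`w(φ)` is translation by `φ` followed by multiplication with a unimodular phase, hence an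
isometry of `ℓ²(V)`. Bilinearity of `ω` in the exponent, together with skew-symmetry to cancel
the cross term `ω(φ,ψ) + ω(ψ,φ)`, gives the composition law; since `ω(φ,φ) = 0` it makes
`w(-φ)` a right inverse of `w(φ)`, and an isometry with a right inverse is unitary with that
inverse as its adjoint.
-/

open Complex ContinuousLinearMap
open scoped lp ENNReal

section Reindex

variable {α β E F : Type*} [NormedAddCommGroup E] [NormedAddCommGroup F] {p : ℝ≥0∞}

theorem Memℓp.comp_equiv {f : α → E} (hf : Memℓp f p) (e : β ≃ α) : Memℓp (f ∘ e) p := by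
  obtain (rfl | rfl | hp) := p.trichotomy
  · rw [memℓp_zero_iff] at hf ⊢
    exact (hf.preimage e.injective.injOn :)
  · rw [memℓp_infty_iff] at hf ⊢
    rwa [← e.surjective.range_comp] at hf
  · rw [memℓp_gen_iff hp] at hf ⊢
    exact e.summable_iff.2 hf

theorem lp.norm_eq_of_norm_eq_comp_equiv (hp : 0 < p.toReal) (e : β ≃ α)
    {f : lp (fun _ : α => E) p} {g : lp (fun _ : β => F) p} (hgf : ∀ i, ‖g i‖ = ‖f (e i)‖) :
    ‖g‖ = ‖f‖ := by
  rw [lp.norm_eq_tsum_rpow hp, lp.norm_eq_tsum_rpow hp, ← e.tsum_eq]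
  simp only [hgf]

end Reindex

theorem ContinuousLinearMap.adjoint_eq_of_norm_map_of_comp_eq_id {𝕜 H K : Type*} [RCLike 𝕜]
    [NormedAddCommGroup H] [InnerProductSpace 𝕜 H] [CompleteSpace H]
    [NormedAddCommGroup K] [InnerProductSpace 𝕜 K] [CompleteSpace K]
    {u : H →L[𝕜] K} {v : K →L[𝕜] H} (hu : ∀ x, ‖u x‖ = ‖x‖) (huv : u ∘L v = .id 𝕜 K) :
    adjoint u = v := by
  calc adjoint u = adjoint u ∘L (u ∘L v) := by rw [huv, comp_id]
    _ = v := by rw [← comp_assoc, (norm_map_iff_adjoint_comp_self u).1 hu, one_def, id_comp]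

namespace Weyl

variable {V : Type*} [AddCommGroup V] [Module ℝ V] (ω : V →ₗ[ℝ] V →ₗ[ℝ] ℝ)

noncomputable def phase (φ ψ : V) : ℂ :=
  exp (I * (ω φ ψ : ℂ) / 2)

theorem norm_phase (φ ψ : V) : ‖phase ω φ ψ‖ = 1 := by
  rw [phase, mul_comm, mul_div_right_comm, ← ofReal_ofNat, ← ofReal_div, norm_exp_ofReal_mul_I]

theorem phase_zero_left (ψ : V) : phase ω 0 ψ = 1 := by
  simp [phase]

theorem phase_add_left (φ φ' ψ : V) : phase ω (φ + φ') ψ = phase ω φ ψ * phase ω φ' ψ := by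
  rw [phase, phase, phase, ← exp_add, map_add, LinearMap.add_apply, ofReal_add]
  ring_nf

theorem phase_add_right (φ ψ ψ' : V) : phase ω φ (ψ + ψ') = phase ω φ ψ * phase ω φ ψ' := by
  rw [phase, phase, phase, ← exp_add, map_add, ofReal_add]
  ring_nf

variable {ω}

theorem phase_mul_phase_swap (hskew : ∀ φ ψ : V, ω φ ψ = - ω ψ φ) (φ ψ : V) :
    phase ω φ ψ * phase ω ψ φ = 1 := by
  rw [phase, phase, ← exp_add, hskew, ofReal_neg]
  ring_nf
  exact exp_zero

theorem norm_phase_mul_shift (φ : V) (F : V → ℂ) (ψ : V) :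
    ‖phase ω φ ψ * F (φ + ψ)‖ = ‖F (Equiv.addLeft φ ψ)‖ := by
  rw [norm_mul, norm_phase, one_mul, Equiv.coe_addLeft]

variable (ω) in
noncomputable def operator (φ : V) : ℓ²(V, ℂ) →L[ℂ] ℓ²(V, ℂ) :=
  LinearMap.mkContinuous
    { toFun F := ⟨fun ψ => phase ω φ ψ * F (φ + ψ),
        ((lp.memℓp F).comp_equiv (Equiv.addLeft φ)).mono' fun ψ =>
          (norm_phase_mul_shift φ F ψ).le⟩
      map_add' F G := lp.ext <| funext fun ψ => mul_add _ _ _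
      map_smul' c F := lp.ext <| funext fun ψ => mul_left_comm _ _ _ }
    1 fun F => by
      rw [one_mul]
      exact (lp.norm_eq_of_norm_eq_comp_equiv (by norm_num) (Equiv.addLeft φ)
        (norm_phase_mul_shift φ F)).le

theorem operator_apply (φ : V) (F : ℓ²(V, ℂ)) (ψ : V) :
    operator ω φ F ψ = phase ω φ ψ * F (φ + ψ) :=
  rfl

theorem norm_operator_apply (φ : V) (F : ℓ²(V, ℂ)) : ‖operator ω φ F‖ = ‖F‖ :=
  lp.norm_eq_of_norm_eq_comp_equiv (by norm_num) (Equiv.addLeft φ) (norm_phase_mul_shift φ F)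

theorem operator_zero : operator ω 0 = 1 := by
  ext F ψ
  rw [operator_apply, phase_zero_left, one_mul, zero_add]
  rfl

theorem operator_add (hskew : ∀ φ ψ : V, ω φ ψ = - ω ψ φ) (φ ψ : V) :
    operator ω (φ + ψ) = phase ω φ ψ • (operator ω φ ∘L operator ω ψ) := by
  ext F χ
  rw [smul_apply, lp.coeFn_smul, Pi.smul_apply, smul_eq_mul, comp_apply, operator_apply,
    operator_apply, operator_apply, add_left_comm, add_assoc, phase_add_left, phase_add_right]
  linear_combination -phase ω φ χ * phase ω ψ χ * F (φ + (ψ + χ)) *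
    phase_mul_phase_swap hskew φ ψ

theorem phase_self_neg (hskew : ∀ φ ψ : V, ω φ ψ = - ω ψ φ) (φ : V) : phase ω φ (-φ) = 1 := by
  have hself : ω φ φ = 0 := by linarith [hskew φ φ]
  simp [phase, hself]

theorem operator_comp_operator_neg (hskew : ∀ φ ψ : V, ω φ ψ = - ω ψ φ) (φ : V) :
    operator ω φ ∘L operator ω (-φ) = 1 := by
  simpa [phase_self_neg hskew, operator_zero] using (operator_add hskew φ (-φ)).symm

theorem adjoint_operator (hskew : ∀ φ ψ : V, ω φ ψ = - ω ψ φ) (φ : V) :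
    adjoint (operator ω φ) = operator ω (-φ) :=
  adjoint_eq_of_norm_map_of_comp_eq_id (norm_operator_apply φ) (operator_comp_operator_neg hskew φ)

end Weyl

/-- On `H = L²(V,ℂ)` (with `V` equipped with counting measure, i.e. the space
`ℓ²(V,ℂ)` of square-summable families), the prescription
`(w(φ)F)(ψ) = e^{iω(φ,ψ)/2} F(φ+ψ)` defines bounded, indeed unitary, operators
`w(φ)` satisfying the Weyl relations. -/
theorem stmt_4 {V : Type*} [AddCommGroup V] [Module ℝ V]
    (ω : V →ₗ[ℝ] V →ₗ[ℝ] ℝ) (hskew : ∀ φ ψ : V, ω φ ψ = - ω ψ φ) :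
    ∃ W : V → (lp (fun _ : V => ℂ) 2 →L[ℂ] lp (fun _ : V => ℂ) 2),
      (∀ (φ : V) (F : lp (fun _ : V => ℂ) 2) (ψ : V),
        (W φ F : ∀ _ : V, ℂ) ψ = Complex.exp (Complex.I * (ω φ ψ : ℂ) / 2) * (F : ∀ _ : V, ℂ) (φ + ψ)) ∧
      (∀ φ : V, W φ ∘L ContinuousLinearMap.adjoint (W φ) = 1 ∧
        ContinuousLinearMap.adjoint (W φ) ∘L W φ = 1) ∧
      W 0 = 1 ∧
      (∀ φ : V, W (-φ) = ContinuousLinearMap.adjoint (W φ)) ∧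
      (∀ φ ψ : V, W (φ + ψ) =
        Complex.exp (Complex.I * (ω φ ψ : ℂ) / 2) • (W φ ∘L W ψ)) := by
  refine ⟨Weyl.operator ω, fun φ F ψ => rfl, fun φ => ?_, Weyl.operator_zero,
    fun φ => (Weyl.adjoint_operator hskew φ).symm, Weyl.operator_add hskew⟩
  rw [Weyl.adjoint_operator hskew]
  refine ⟨Weyl.operator_comp_operator_neg hskew φ, ?_⟩
  simpa using Weyl.operator_comp_operator_neg hskew (-φ)
end

section
/- Let G₊, G₋ be advanced and retarded Green's operators for a Green-hyperbolic operator P on a vector bundle S over a Lorentzian manifold M, and G₊*, G₋* Green's operators for the dual operator P*. Then ∫_M ⟨G_±* φ, ψ⟩ dV = ∫_M ⟨φ, G_∓ ψ⟩ dV for all compactly supported sections φ of S* and ψ of S. -/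
/-- Abstract formalization of Lemma on Green's operators of dual operators:
`V` models sections of `S`, `V'` sections of `S*`, `Vc`, `V'c` the compactly
supported ones, `B` the integral pairing `∫⟨·,·⟩ dV` (valid on pairs with compact
overlapping support, `hadj` expressing formal duality of `P` and `P*`), `Jp/Jm`
the causal future/past, `Cpt` compactness.  If `G_±` are Green's operators for
`P` and `G*_±` Green's operators for the dual `P*`, then
`∫⟨G*_± φ, ψ⟩ = ∫⟨φ, G_∓ ψ⟩` for all compactly supported `φ, ψ`. -/
theorem stmt_12 {M V V' Vc V'c : Type*}
    [AddCommGroup V] [Module ℝ V] [AddCommGroup V'] [Module ℝ V']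
    [AddCommGroup Vc] [Module ℝ Vc] [AddCommGroup V'c] [Module ℝ V'c]
    (ι : Vc →ₗ[ℝ] V) (ι' : V'c →ₗ[ℝ] V')
    (supp : V → Set M) (supp' : V' → Set M)
    (Jp Jm : Set M → Set M) (Cpt : Set M → Prop)
    (hCptMono : ∀ {A B : Set M}, A ⊆ B → Cpt B → Cpt A)
    (hGH : ∀ A B : Set M, Cpt A → Cpt B → Cpt (Jp A ∩ Jm B))
    (hCc : ∀ φ : Vc, Cpt (supp (ι φ)))
    (hCc' : ∀ φ : V'c, Cpt (supp' (ι' φ)))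
    (P : V →ₗ[ℝ] V) (P' : V' →ₗ[ℝ] V')
    (B : V' →ₗ[ℝ] V →ₗ[ℝ] ℝ)
    (hadj : ∀ (φ : V') (ψ : V), Cpt (supp' φ ∩ supp ψ) → B (P' φ) ψ = B φ (P ψ))
    (Gp Gm : Vc →ₗ[ℝ] V) (G'p G'm : V'c →ₗ[ℝ] V')
    (hG1p : ∀ ψ : Vc, P (Gp ψ) = ι ψ)
    (hG1m : ∀ ψ : Vc, P (Gm ψ) = ι ψ)
    (hG1p' : ∀ φ : V'c, P' (G'p φ) = ι' φ)
    (hG1m' : ∀ φ : V'c, P' (G'm φ) = ι' φ)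
    (hG3p : ∀ ψ : Vc, supp (Gp ψ) ⊆ Jp (supp (ι ψ)))
    (hG3m : ∀ ψ : Vc, supp (Gm ψ) ⊆ Jm (supp (ι ψ)))
    (hG3p' : ∀ φ : V'c, supp' (G'p φ) ⊆ Jp (supp' (ι' φ)))
    (hG3m' : ∀ φ : V'c, supp' (G'm φ) ⊆ Jm (supp' (ι' φ))) :
    ∀ (φ : V'c) (ψ : Vc),
      B (G'p φ) (ι ψ) = B (ι' φ) (Gm ψ) ∧
      B (G'm φ) (ι ψ) = B (ι' φ) (Gp ψ) := by
  intro φ ψ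
  constructor
  · have h1 : B (G'p φ) (ι ψ) = B (G'p φ) (P (Gm ψ)) := by rw [hG1m]
    have hcpt : Cpt (supp' (G'p φ) ∩ supp (Gm ψ)) := by
      refine hCptMono ?_ (hGH _ _ (hCc' φ) (hCc ψ))
      exact Set.inter_subset_inter (hG3p' φ) (hG3m ψ)
    rw [h1, ← hadj _ _ hcpt, hG1p']
  · have h1 : B (G'm φ) (ι ψ) = B (G'm φ) (P (Gp ψ)) := by rw [hG1p]
    have hcpt : Cpt (supp (Gp ψ) ∩ supp' (G'm φ)) := by
      refine hCptMono ?_ (hGH _ _ (hCc ψ) (hCc' φ))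
      exact Set.inter_subset_inter (hG3p ψ) (hG3m' φ)
    have hcpt' : Cpt (supp' (G'm φ) ∩ supp (Gp ψ)) := by
      rwa [Set.inter_comm]
    rw [h1, ← hadj _ _ hcpt', hG1m']
end

section
/- Let M be globally hyperbolic with Green's operators G_± for P, and G = G₊ - G₋. If φ ∈ C^∞_c(M,S) satisfies Gφ = 0, then φ = Pψ for some ψ ∈ C^∞_c(M,S); i.e., ker(G) ∩ C^∞_c(M,S) = P(C^∞_c(M,S)). -/
/-- Abstract formalization of exactness at the second spot: on a globally
hyperbolic spacetime (where `J₊(A) ∩ J₋(A)` is compact for compact `A`, and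
every smooth section with compact support lies in the image of
`ι : C^∞_c → C^∞`), if `φ` is compactly supported with `Gφ = G₊φ - G₋φ = 0`,
then `φ = Pψ` for some compactly supported `ψ`. -/
theorem stmt_14 {M V Vc : Type*}
    [AddCommGroup V] [Module ℝ V] [AddCommGroup Vc] [Module ℝ Vc]
    (ι : Vc →ₗ[ℝ] V) (hιinj : Function.Injective ι)
    (supp : V → Set M) (Jp Jm : Set M → Set M) (Cpt : Set M → Prop)
    (hCptMono : ∀ {A B : Set M}, A ⊆ B → Cpt B → Cpt A)
    (hGH : ∀ A : Set M, Cpt A → Cpt (Jp A ∩ Jm A))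
    (hCc : ∀ φ : Vc, Cpt (supp (ι φ)))
    (hrange : ∀ ψ : V, Cpt (supp ψ) → ∃ χ : Vc, ι χ = ψ)
    (P : V →ₗ[ℝ] V) (Pc : Vc →ₗ[ℝ] Vc)
    (hPc : ∀ φ : Vc, ι (Pc φ) = P (ι φ))
    (Gp Gm : Vc →ₗ[ℝ] V)
    (hG1p : ∀ φ : Vc, P (Gp φ) = ι φ)
    (hG1m : ∀ φ : Vc, P (Gm φ) = ι φ)
    (hG3p : ∀ φ : Vc, supp (Gp φ) ⊆ Jp (supp (ι φ)))
    (hG3m : ∀ φ : Vc, supp (Gm φ) ⊆ Jm (supp (ι φ))) :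
    ∀ φ : Vc, Gp φ = Gm φ → ∃ ψ : Vc, Pc ψ = φ := by
  intro φ h
  have hsub : supp (Gp φ) ⊆ Jp (supp (ι φ)) ∩ Jm (supp (ι φ)) :=
    Set.subset_inter (hG3p φ) (h ▸ hG3m φ)
  obtain ⟨χ, hχ⟩ := hrange (Gp φ) (hCptMono hsub (hGH _ (hCc φ)))
  exact ⟨χ, hιinj (by rw [hPc, hχ, hG1p])⟩
end

section
/- Green's operators on a globally hyperbolic spacetime are unique: if G₊ and G̃₊ are both advanced Green's operators for a Green-hyperbolic operator P (whose dual P* also has Green's operators), then G₊ = G̃₊; similarly for retarded Green's operators. -/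
/-- Abstract formalization of uniqueness of Green's operators on a globally
hyperbolic spacetime: if `Gp` and `G₁p` are both advanced Green's operators for a
Green-hyperbolic operator `P` (whose formal dual `P'` also has Green's operators
`G'p`, `G'm`), then `Gp = G₁p`; similarly the retarded Green's operators `Gm` and
`G₁m` coincide.  The pairing `B` models the integral pairing between sections of
the dual bundle and sections of the bundle, `hadj` formal duality of `P` and `P'`
under compactly overlapping supports, `hGH` global hyperbolicity
(`J₊(A) ∩ J₋(B)` compact for `A`, `B` compact), and `hsep` non-degeneracy of the
pairing against test sections.  The key fact used in the proof — a solution of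
`Pψ = 0` with past-compact (resp. future-compact) support vanishes — is derivable
in this setting and is not assumed. -/
theorem stmt_16 {M V V' Vc V'c : Type*}
    [AddCommGroup V] [Module ℝ V] [AddCommGroup V'] [Module ℝ V']
    [AddCommGroup Vc] [Module ℝ Vc] [AddCommGroup V'c] [Module ℝ V'c]
    (ι : Vc →ₗ[ℝ] V) (ι' : V'c →ₗ[ℝ] V')
    (supp : V → Set M) (supp' : V' → Set M)
    (Jp Jm : Set M → Set M) (Cpt : Set M → Prop)
    (hCptMono : ∀ {A B : Set M}, A ⊆ B → Cpt B → Cpt A)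
    (hGH : ∀ A B : Set M, Cpt A → Cpt B → Cpt (Jp A ∩ Jm B))
    (hsupp_sub : ∀ a b : V, supp (a - b) ⊆ supp a ∪ supp b)
    (hCc : ∀ φ : Vc, Cpt (supp (ι φ)))
    (hCc' : ∀ χ : V'c, Cpt (supp' (ι' χ)))
    (P : V →ₗ[ℝ] V) (Pc : Vc →ₗ[ℝ] Vc)
    (hPc : ∀ φ : Vc, ι (Pc φ) = P (ι φ))
    (P' : V' →ₗ[ℝ] V')
    (B : V' →ₗ[ℝ] V →ₗ[ℝ] ℝ)
    (hadj : ∀ (χ : V') (ψ : V), Cpt (supp' χ ∩ supp ψ) → B (P' χ) ψ = B χ (P ψ))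
    (hsep : ∀ ψ : V, (∀ χ : V'c, B (ι' χ) ψ = 0) → ψ = 0)
    (G'p G'm : V'c →ₗ[ℝ] V')
    (hG1p' : ∀ χ : V'c, P' (G'p χ) = ι' χ)
    (hG1m' : ∀ χ : V'c, P' (G'm χ) = ι' χ)
    (hG3p' : ∀ χ : V'c, supp' (G'p χ) ⊆ Jp (supp' (ι' χ)))
    (hG3m' : ∀ χ : V'c, supp' (G'm χ) ⊆ Jm (supp' (ι' χ)))
    (Gp G₁p Gm G₁m : Vc →ₗ[ℝ] V)
    (hG1p : ∀ φ : Vc, P (Gp φ) = ι φ)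
    (hG1p₁ : ∀ φ : Vc, P (G₁p φ) = ι φ)
    (hG2p : ∀ φ : Vc, Gp (Pc φ) = ι φ)
    (hG2p₁ : ∀ φ : Vc, G₁p (Pc φ) = ι φ)
    (hG3p : ∀ φ : Vc, supp (Gp φ) ⊆ Jp (supp (ι φ)))
    (hG3p₁ : ∀ φ : Vc, supp (G₁p φ) ⊆ Jp (supp (ι φ)))
    (hG1m : ∀ φ : Vc, P (Gm φ) = ι φ)
    (hG1m₁ : ∀ φ : Vc, P (G₁m φ) = ι φ)
    (hG2m : ∀ φ : Vc, Gm (Pc φ) = ι φ)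
    (hG2m₁ : ∀ φ : Vc, G₁m (Pc φ) = ι φ)
    (hG3m : ∀ φ : Vc, supp (Gm φ) ⊆ Jm (supp (ι φ)))
    (hG3m₁ : ∀ φ : Vc, supp (G₁m φ) ⊆ Jm (supp (ι φ))) :
    (∀ φ : Vc, Gp φ = G₁p φ) ∧ (∀ φ : Vc, Gm φ = G₁m φ) := by
  constructor
  · intro φ
    have hψ : Gp φ - G₁p φ = 0 := by
      apply hsep
      intro χ
      have hP : P (Gp φ - G₁p φ) = 0 := by
        rw [map_sub, hG1p, hG1p₁, sub_self]
      have hcpt : Cpt (supp' (G'm χ) ∩ supp (Gp φ - G₁p φ)) := by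
        apply hCptMono (B := Jp (supp (ι φ)) ∩ Jm (supp' (ι' χ)))
        · intro x hx
          refine ⟨?_, hG3m' χ hx.1⟩
          have := hsupp_sub (Gp φ) (G₁p φ) hx.2
          rcases this with h | h
          · exact hG3p φ h
          · exact hG3p₁ φ h
        · exact hGH _ _ (hCc φ) (hCc' χ)
      calc B (ι' χ) (Gp φ - G₁p φ)
          = B (P' (G'm χ)) (Gp φ - G₁p φ) := by rw [hG1m']
        _ = B (G'm χ) (P (Gp φ - G₁p φ)) := hadj _ _ hcpt
        _ = 0 := by rw [hP, map_zero]
    exact sub_eq_zero.mp hψ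
  · intro φ
    have hψ : Gm φ - G₁m φ = 0 := by
      apply hsep
      intro χ
      have hP : P (Gm φ - G₁m φ) = 0 := by
        rw [map_sub, hG1m, hG1m₁, sub_self]
      have hcpt : Cpt (supp' (G'p χ) ∩ supp (Gm φ - G₁m φ)) := by
        apply hCptMono (B := Jp (supp' (ι' χ)) ∩ Jm (supp (ι φ)))
        · intro x hx
          refine ⟨hG3p' χ hx.1, ?_⟩
          have := hsupp_sub (Gm φ) (G₁m φ) hx.2
          rcases this with h | h
          · exact hG3m φ h
          · exact hG3m₁ φ h
        · exact hGH _ _ (hCc' χ) (hCc φ)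
      calc B (ι' χ) (Gm φ - G₁m φ)
          = B (P' (G'p χ)) (Gm φ - G₁m φ) := by rw [hG1p']
        _ = B (G'p χ) (P (Gm φ - G₁m φ)) := hadj _ _ hcpt
        _ = 0 := by rw [hP, map_zero]
    exact sub_eq_zero.mp hψ
end

section
/- Let m ≥ 3 and fix a point x of an m-dimensional Lorentzian spin manifold. The principal symbol σ_Q(ξ) of the Rarita–Schwinger operator, given by σ_Q(ξ)ψ = i[(id ⊗ ξ^♯·)ψ - (2/m) Σ_β e_β* ⊗ e_β·(ξ^♯ ⌟ ψ)] on Σ^{3/2}_x M = ker(γ) ⊂ T*_x M ⊗ Σ_x M, is invertible if and only if ξ is not lightlike. That is, the characteristic variety of the Rarita–Schwinger operator is exactly the set of nonzero lightlike covectors. -/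
/-!
Write `U ψ = x ⌟ ψ` and `q = ⟨x, x⟩`. The Clifford relations give `γ (σ ψ) = -i x·(γ ψ)`, so `σ`
preserves `ker γ`, and `U (σ ψ) = i (1 - 2/m) x·(U ψ)`. As `x·x· = -q`, for `q ≠ 0` these identities
let one solve `σ ψ = χ` uniquely on all of `T* ⊗ Σ`, first for `U ψ` and then for `ψ`; the solution
lies in `ker γ` when `χ` does. For lightlike `x ≠ 0` pick `φ ≠ 0` with `x·φ = 0`: then `x^♭ ⊗ φ` is a
nonzero element of `ker γ` killed by `σ`.
-/

open Complex

namespace RaritaSchwinger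

variable {m : ℕ} {S : Type*} [AddCommGroup S] [Module ℂ S]

def diagForm (ε X Y : Fin m → ℝ) : ℝ := ∑ j, ε j * X j * Y j

def IsCliffordMap (ε : Fin m → ℝ) (c : (Fin m → ℝ) →ₗ[ℝ] (S →ₗ[ℂ] S)) : Prop :=
  ∀ X Y φ, c X (c Y φ) + c Y (c X φ) = ((-2 * diagForm ε X Y : ℝ) : ℂ) • φ

def contract (x : Fin m → ℝ) : (Fin m → S) →ₗ[ℂ] S where
  toFun ψ := ∑ α, (x α : ℂ) • ψ α
  map_add' ψ ψ' := by simp [smul_add, Finset.sum_add_distrib]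
  map_smul' a ψ := by simp [Finset.smul_sum, smul_comm a]

def gamma (ε : Fin m → ℝ) (c : (Fin m → ℝ) →ₗ[ℝ] (S →ₗ[ℂ] S)) : (Fin m → S) →ₗ[ℂ] S where
  toFun ψ := ∑ j, (ε j : ℂ) • c (Pi.single j 1) (ψ j)
  map_add' ψ ψ' := by simp [smul_add, Finset.sum_add_distrib]
  map_smul' a ψ := by simp [Finset.smul_sum, smul_comm a]

noncomputable def symbol (c : (Fin m → ℝ) →ₗ[ℝ] (S →ₗ[ℂ] S)) (x : Fin m → ℝ) :
    (Fin m → S) →ₗ[ℂ] (Fin m → S) where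
  toFun ψ β := I • (c x (ψ β) - ((2 : ℂ) / m) • c (Pi.single β 1) (contract x ψ))
  map_add' ψ ψ' := by ext β; simp only [map_add, Pi.add_apply]; module
  map_smul' a ψ := by ext β; simp only [map_smul, Pi.smul_apply, RingHom.id_apply]; module

lemma diagForm_single_left (ε X : Fin m → ℝ) (j : Fin m) :
    diagForm ε (Pi.single j 1) X = ε j * X j := by
  simp [diagForm, Pi.single_apply]

lemma contract_map (x : Fin m → ℝ) (f : S →ₗ[ℂ] S) (ψ : Fin m → S) :
    contract x (fun β => f (ψ β)) = f (contract x ψ) := by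
  simp [contract]

lemma contract_single (c : (Fin m → ℝ) →ₗ[ℝ] (S →ₗ[ℂ] S)) (x : Fin m → ℝ) (φ : S) :
    contract x (fun β => c (Pi.single β 1) φ) = c x φ := by
  conv_rhs => rw [pi_eq_sum_univ' x]
  simp [contract, coe_smul]

section Clifford

variable {ε : Fin m → ℝ} {c : (Fin m → ℝ) →ₗ[ℝ] (S →ₗ[ℂ] S)}

lemma IsCliffordMap.apply_apply_self (hc : IsCliffordMap ε c) (X : Fin m → ℝ) (φ : S) :
    c X (c X φ) = (-(diagForm ε X X : ℂ)) • φ := by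
  refine smul_right_injective S (two_ne_zero (α := ℂ)) ?_
  simp only [two_smul, hc X X φ]
  match_scalars
  ring

lemma IsCliffordMap.eq_zero_of_apply_eq_zero (hc : IsCliffordMap ε c) {X : Fin m → ℝ}
    (hX : diagForm ε X X ≠ 0) {φ : S} (h : c X φ = 0) : φ = 0 := by
  have := hc.apply_apply_self X φ
  rw [h, map_zero, eq_comm, smul_eq_zero] at this
  exact this.resolve_left (by simpa using hX)

lemma IsCliffordMap.single_apply_comm (hc : IsCliffordMap ε c) (j : Fin m) (X : Fin m → ℝ)
    (φ : S) :
    c (Pi.single j 1) (c X φ) = ((-2 * (ε j * X j) : ℝ) : ℂ) • φ - c X (c (Pi.single j 1) φ) := by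
  rw [← diagForm_single_left, ← hc]
  abel

lemma IsCliffordMap.gamma_single (hc : IsCliffordMap ε c) (hε : ∀ j, ε j * ε j = 1) (φ : S) :
    gamma ε c (fun j => c (Pi.single j 1) φ) = (-(m : ℂ)) • φ := by
  have hεC : ∀ j, (ε j : ℂ) * ε j = 1 := fun j => by exact_mod_cast hε j
  simp only [gamma, LinearMap.coe_mk, AddHom.coe_mk, hc.apply_apply_self, diagForm_single_left,
    Pi.single_eq_same, mul_one, smul_smul]
  simp [hεC, ← Nat.cast_smul_eq_nsmul ℂ]

lemma IsCliffordMap.gamma_map (hc : IsCliffordMap ε c) (hε : ∀ j, ε j * ε j = 1)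
    (X : Fin m → ℝ) (ψ : Fin m → S) :
    gamma ε c (fun j => c X (ψ j)) = (-2 : ℂ) • contract X ψ - c X (gamma ε c ψ) := by
  have hεC : ∀ j, (ε j : ℂ) * ε j = 1 := fun j => by exact_mod_cast hε j
  simp only [gamma, contract, LinearMap.coe_mk, AddHom.coe_mk, hc.single_apply_comm, map_sum,
    map_smul, smul_sub, Finset.sum_sub_distrib, Finset.smul_sum, smul_smul]
  congr 1
  refine Finset.sum_congr rfl fun j _ => ?_
  congr 1
  push_cast
  linear_combination (-2 * (X j : ℂ)) * hεC j

end Clifford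

section Symbol

variable {ε : Fin m → ℝ} {c : (Fin m → ℝ) →ₗ[ℝ] (S →ₗ[ℂ] S)} {x : Fin m → ℝ}

lemma symbol_eq (ψ : Fin m → S) :
    symbol c x ψ = I • ((fun β => c x (ψ β)) -
      ((2 : ℂ) / m) • fun β => c (Pi.single β 1) (contract x ψ)) :=
  rfl

lemma symbol_apply (ψ : Fin m → S) (β : Fin m) :
    symbol c x ψ β = I • (c x (ψ β) - ((2 : ℂ) / m) • c (Pi.single β 1) (contract x ψ)) :=
  rfl

lemma contract_symbol (ψ : Fin m → S) :
    contract x (symbol c x ψ) = (I * (1 - 2 / m)) • c x (contract x ψ) := by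
  rw [symbol_eq, map_smul, map_sub, map_smul, contract_map, contract_single]
  module

lemma IsCliffordMap.gamma_symbol (hc : IsCliffordMap ε c) (hε : ∀ j, ε j * ε j = 1)
    (hm : m ≠ 0) (ψ : Fin m → S) :
    gamma ε c (symbol c x ψ) = (-I) • c x (gamma ε c ψ) := by
  have hm' : (m : ℂ) ≠ 0 := Nat.cast_ne_zero.mpr hm
  rw [symbol_eq, map_smul, map_sub, map_smul, hc.gamma_map hε, hc.gamma_single hε, smul_smul,
    div_mul_eq_mul_div, mul_neg, neg_div, mul_div_cancel_right₀ _ hm']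
  module

lemma IsCliffordMap.mapsTo_symbol (hc : IsCliffordMap ε c) (hε : ∀ j, ε j * ε j = 1)
    (hm : m ≠ 0) :
    Set.MapsTo (symbol c x) {ψ | gamma ε c ψ = 0} {ψ | gamma ε c ψ = 0} := by
  intro ψ (hψ : gamma ε c ψ = 0)
  show gamma ε c _ = 0
  rw [hc.gamma_symbol hε hm, hψ, map_zero, smul_zero]

lemma one_sub_two_div_ne_zero (hm : m ≠ 2) : (1 - 2 / m : ℂ) ≠ 0 :=
  sub_ne_zero.mpr (div_ne_one_of_ne (by exact_mod_cast hm.symm)).symm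

lemma IsCliffordMap.symbol_injective (hc : IsCliffordMap ε c) (hm : m ≠ 2)
    (hx : diagForm ε x x ≠ 0) : Function.Injective (symbol c x) := by
  refine (injective_iff_map_eq_zero _).mpr fun ψ hψ => ?_
  have hU : contract x ψ = 0 := by
    have h := contract_symbol (c := c) (x := x) ψ
    rw [hψ, map_zero, eq_comm, smul_eq_zero] at h
    exact hc.eq_zero_of_apply_eq_zero hx
      (h.resolve_left (mul_ne_zero I_ne_zero (one_sub_two_div_ne_zero hm)))
  funext β
  have h := congrFun hψ β
  rw [symbol_eq, hU] at h
  simp only [map_zero, smul_zero, Pi.smul_apply, Pi.sub_apply, sub_zero, Pi.zero_apply,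
    smul_eq_zero, I_ne_zero, false_or] at h
  exact hc.eq_zero_of_apply_eq_zero hx h

lemma IsCliffordMap.symbol_surjective (hc : IsCliffordMap ε c) (hm : m ≠ 2)
    (hx : diagForm ε x x ≠ 0) : Function.Surjective (symbol c x) := by
  intro χ
  have hq : (diagForm ε x x : ℂ) ≠ 0 := by exact_mod_cast hx
  have hm' : (1 - 2 / (m : ℂ)) ≠ 0 := one_sub_two_div_ne_zero hm
  set q : ℂ := (diagForm ε x x : ℂ)
  -- `W` is forced to be `contract x ψ`: apply `contract x`, then `c x`, to `σ ψ = χ`.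
  set W : S := (I * q⁻¹ * (1 - 2 / (m : ℂ))⁻¹) • c x (contract x χ)
  set η : Fin m → S := (-I) • χ + ((2 : ℂ) / m) • fun β => c (Pi.single β 1) W
  set ψ : Fin m → S := fun β => (-q⁻¹) • c x (η β)
  have hxψ : ∀ β, c x (ψ β) = η β := fun β => by
    rw [map_smul, hc.apply_apply_self, smul_smul, neg_mul_neg, inv_mul_cancel₀ hq, one_smul]
  have hW : contract x ψ = W := by
    have h1 : contract x ψ = (-q⁻¹) • c x (contract x η) := contract_map x ((-q⁻¹) • c x) η
    have h2 : contract x η = (-I) • contract x χ + ((2 : ℂ) / m) • c x W := by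
      rw [map_add, map_smul, map_smul (contract x) ((2 : ℂ) / m), contract_single]
    rw [h1, h2, map_add, map_smul, map_smul, hc.apply_apply_self]
    simp only [W, smul_add, smul_smul]
    match_scalars
    field_simp
    ring
  refine ⟨ψ, funext fun β => ?_⟩
  rw [symbol_apply, hxψ, hW]
  simp [η, smul_smul]

lemma IsCliffordMap.bijOn_symbol (hc : IsCliffordMap ε c) (hε : ∀ j, ε j * ε j = 1)
    (hm₀ : m ≠ 0) (hm₂ : m ≠ 2) (hx : diagForm ε x x ≠ 0) :
    Set.BijOn (symbol c x) {ψ | gamma ε c ψ = 0} {ψ | gamma ε c ψ = 0} := by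
  refine ⟨hc.mapsTo_symbol hε hm₀, (hc.symbol_injective hm₂ hx).injOn,
    fun χ (hχ : gamma ε c χ = 0) => ?_⟩
  obtain ⟨ψ, rfl⟩ := hc.symbol_surjective hm₂ hx χ
  rw [hc.gamma_symbol hε hm₀, smul_eq_zero] at hχ
  exact ⟨ψ, hc.eq_zero_of_apply_eq_zero hx (hχ.resolve_left (neg_ne_zero.mpr I_ne_zero)), rfl⟩

lemma gamma_flat (hε : ∀ j, ε j * ε j = 1) (φ : S) :
    gamma ε c (fun j => ((ε j * x j : ℝ) : ℂ) • φ) = c x φ := by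
  rw [← contract_single c x φ]
  simp only [gamma, contract, LinearMap.coe_mk, AddHom.coe_mk]
  refine Finset.sum_congr rfl fun j _ => ?_
  rw [map_smul, smul_smul, ← ofReal_mul, ← mul_assoc, hε, one_mul]

lemma contract_flat (φ : S) :
    contract x (fun j => ((ε j * x j : ℝ) : ℂ) • φ) = (diagForm ε x x : ℂ) • φ := by
  simp only [contract, diagForm, LinearMap.coe_mk, AddHom.coe_mk, smul_smul, ← Finset.sum_smul]
  push_cast
  congr 1
  exact Finset.sum_congr rfl fun j _ => by ring

lemma not_injOn_symbol_of_lightlike (hε : ∀ j, ε j * ε j = 1) (hx : x ≠ 0)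
    (hq : diagForm ε x x = 0) {φ : S} (hφ : φ ≠ 0) (hxφ : c x φ = 0) :
    ¬ Set.InjOn (symbol c x) {ψ | gamma ε c ψ = 0} := by
  set ψ : Fin m → S := fun j => ((ε j * x j : ℝ) : ℂ) • φ
  have hψK : gamma ε c ψ = 0 := (gamma_flat hε φ).trans hxφ
  have hU : contract x ψ = 0 := by rw [contract_flat, hq, ofReal_zero, zero_smul]
  have hψ : symbol c x ψ = symbol c x 0 := by
    funext β
    rw [symbol_apply, hU, map_smul, hxφ]
    simp
  obtain ⟨β, hβ⟩ : ∃ β, x β ≠ 0 := Function.ne_iff.mp hx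
  intro hinj
  have h := congrFun (hinj hψK (map_zero (gamma ε c)) hψ) β
  simp only [ψ, Pi.zero_apply, smul_eq_zero, ofReal_eq_zero, mul_eq_zero, hφ, or_false] at h
  exact h.elim (left_ne_zero_of_mul_eq_one (hε β)) hβ

end Symbol

end RaritaSchwinger

open RaritaSchwinger in
/-- Abstract pointwise formalization of Lemma: the characteristic variety of the
Rarita–Schwinger operator consists exactly of the lightlike covectors.  Here
`S` is the complex spinor module at a point, `c` the Clifford multiplication by
vectors of the Lorentzian vector space `ℝ^m` (with orthonormal basis `Pi.single j 1`
of signature `ε`, `ε 0 = -1`, `ε j = 1` otherwise), satisfying the Clifford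
relations, and such that Clifford multiplication by a nonzero lightlike vector
has nontrivial kernel.  A covector `ξ` is identified with the coordinates `x` of
`ξ^♯`; `K` is the subspace `Σ^{3/2} = ker γ` of `T*⊗Σ = (Fin m → S)`, and `σQ`
the principal symbol of the Rarita–Schwinger operator.  Then `σQ` maps `K` to
`K`, and for `x ≠ 0` it is bijective on `K` iff `x` is not lightlike. -/
theorem stmt_17 {m : ℕ} (hm : 3 ≤ m)
    (ε : Fin m → ℝ) (hε0 : ε ⟨0, by omega⟩ = -1) (hε : ∀ j : Fin m, j ≠ ⟨0, by omega⟩ → ε j = 1)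
    {S : Type*} [AddCommGroup S] [Module ℂ S]
    (c : (Fin m → ℝ) →ₗ[ℝ] (S →ₗ[ℂ] S))
    (hcl : ∀ (X Y : Fin m → ℝ) (φ : S),
      c X (c Y φ) + c Y (c X φ) = ((-2 * ∑ j, ε j * X j * Y j : ℝ) : ℂ) • φ)
    (hnil : ∀ X : Fin m → ℝ, X ≠ 0 → (∑ j, ε j * X j * X j) = 0 →
      ∃ φ : S, φ ≠ 0 ∧ c X φ = 0) :
    ∀ x : Fin m → ℝ,
      let K : Set (Fin m → S) :=
        {ψ | ∑ j, ((ε j : ℝ) : ℂ) • c (Pi.single j 1) (ψ j) = 0}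
      let σQ : (Fin m → S) → (Fin m → S) := fun ψ β =>
        Complex.I • (c x (ψ β) -
          ((2 : ℂ) / (m : ℂ)) • c (Pi.single β 1) (∑ α, ((x α : ℝ) : ℂ) • ψ α))
      Set.MapsTo σQ K K ∧
      (x ≠ 0 → (Set.BijOn σQ K K ↔ (∑ j, ε j * x j * x j) ≠ 0)) := by
  intro x K σQ
  have hε_sq : ∀ j, ε j * ε j = 1 := fun j => by
    rcases eq_or_ne j ⟨0, by omega⟩ with rfl | hj
    · rw [hε0]; norm_num
    · rw [hε j hj]; norm_num
  have hc : IsCliffordMap ε c := hcl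
  refine ⟨hc.mapsTo_symbol hε_sq (by omega),
    fun hx => ⟨fun hbij hq => ?_, hc.bijOn_symbol hε_sq (by omega) (by omega)⟩⟩
  obtain ⟨φ, hφ, hxφ⟩ := hnil x hx hq
  exact not_injOn_symbol_of_lightlike hε_sq hx hq hφ hxφ hbij.injOn
end
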